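/- Let (S, A, P, r, γ) be a finite MDP with γ ∈ (0,1), p0 an initial state distribution, and let π and μ be policies such that d^μ(s) > 0 for all s ∈ S and μ(a|s) > 0 for all (s,a). If w(s) = d^π(s)/d^μ(s) for all s, then L(w, f) = 0 for every function f : S → ℝ. -/

import Mathlib

open scoped BigOperators
open Finset

noncomputable section

/-- One-step state-distribution update under policy `π` (here `π s a` denotes `π(a|s)`). -/
def nextDist {S A : Type} [Fintype S] [Fintype A]
    (P : S → A → S → ℝ) (π : S → A → ℝ) (d : S → ℝ) : S → ℝ :=
  fun s' => ∑ s, ∑ a, d s * π s a * P s a s'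

/-- The time-`t` state distribution `d_t^π`. -/
def stateDist {S A : Type} [Fintype S] [Fintype A]
    (P : S → A → S → ℝ) (π : S → A → ℝ) (p0 : S → ℝ) : ℕ → S → ℝ
  | 0 => p0
  | t + 1 => nextDist P π (stateDist P π p0 t)

/-- The discounted state distribution `d^π`. -/
def discDist {S A : Type} [Fintype S] [Fintype A]
    (γ : ℝ) (P : S → A → S → ℝ) (π : S → A → ℝ) (p0 : S → ℝ) : S → ℝ :=
  fun s => (1 - γ) * ∑' t : ℕ, γ ^ t * stateDist P π p0 t s

/-- The normalized expected return `R^π_M`. -/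
def expReturn {S A : Type} [Fintype S] [Fintype A]
    (γ : ℝ) (P : S → A → S → ℝ) (r : S → A → ℝ) (π : S → A → ℝ) (p0 : S → ℝ) : ℝ :=
  (1 - γ) * ∑' t : ℕ, γ ^ t * ∑ s, ∑ a, stateDist P π p0 t s * π s a * r s a

/-- The functional `L(w,f)` of Liu et al. (discounted case), with `s ~ d^μ`, `a ~ μ(·|s)`,
`s' ~ P(·|s,a)`:
`L(w,f) = γ E[(w(s)π(a|s)/μ(a|s) − w(s')) f(s')] + (1−γ) E_{s~p0}[(1 − w(s)) f(s)]`. -/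
def Lfun {S A : Type} [Fintype S] [Fintype A]
    (γ : ℝ) (P : S → A → S → ℝ) (π μ : S → A → ℝ) (dμ p0 : S → ℝ) (w f : S → ℝ) : ℝ :=
  γ * ∑ s, ∑ a, ∑ s', dμ s * μ s a * P s a s' * (w s * (π s a / μ s a) - w s') * f s' +
    (1 - γ) * ∑ s, p0 s * (1 - w s) * f s

/-!
Both discounted distributions solve the Bellman flow equation
`d = (1 - γ) p0 + γ · (one step of d)` under their own policy, which follows by peeling the
`t = 0` term off the series defining them. Importance weighting `π/μ` turns the first term of
`L(w, f)` into one step of `d^μ w = d^π` under `π`, so substituting both flow equations makes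
`L(w, f)` collapse to `∑ (d^π - d^μ w) f = 0`.
-/

section

variable {S A : Type} [Fintype S] [Fintype A]

theorem sum_nextDist_mul (P : S → A → S → ℝ) (π : S → A → ℝ) (d g : S → ℝ) :
    ∑ s', nextDist P π d s' * g s' = ∑ s, ∑ a, ∑ s', d s * π s a * P s a s' * g s' := by
  simp only [nextDist, sum_mul]
  rw [sum_comm]
  exact sum_congr rfl fun s _ => sum_comm

theorem stateDist_nonneg {P : S → A → S → ℝ} {π : S → A → ℝ} {p0 : S → ℝ}
    (hP0 : ∀ s a s', 0 ≤ P s a s') (hπ0 : ∀ s a, 0 ≤ π s a) (hp00 : ∀ s, 0 ≤ p0 s) :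
    ∀ t s, 0 ≤ stateDist P π p0 t s
  | 0, s => hp00 s
  | t + 1, s' => sum_nonneg fun s _ => sum_nonneg fun a _ =>
      mul_nonneg (mul_nonneg (stateDist_nonneg hP0 hπ0 hp00 t s) (hπ0 s a)) (hP0 s a s')

theorem sum_stateDist {P : S → A → S → ℝ} {π : S → A → ℝ} {p0 : S → ℝ}
    (hP1 : ∀ s a, ∑ s', P s a s' = 1) (hπ1 : ∀ s, ∑ a, π s a = 1) (hp01 : ∑ s, p0 s = 1) :
    ∀ t, ∑ s, stateDist P π p0 t s = 1
  | 0 => hp01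
  | t + 1 => by
    simpa [stateDist, hP1, hπ1, ← mul_sum, sum_stateDist hP1 hπ1 hp01 t] using
      sum_nextDist_mul P π (stateDist P π p0 t) 1

theorem summable_pow_mul_stateDist {γ : ℝ} {P : S → A → S → ℝ} {π : S → A → ℝ}
    {p0 : S → ℝ} (hγ0 : 0 ≤ γ) (hγ1 : γ < 1)
    (hP0 : ∀ s a s', 0 ≤ P s a s') (hP1 : ∀ s a, ∑ s', P s a s' = 1)
    (hπ0 : ∀ s a, 0 ≤ π s a) (hπ1 : ∀ s, ∑ a, π s a = 1)
    (hp00 : ∀ s, 0 ≤ p0 s) (hp01 : ∑ s, p0 s = 1) (s : S) :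
    Summable fun t => γ ^ t * stateDist P π p0 t s := by
  have hnonneg := stateDist_nonneg hP0 hπ0 hp00
  have hle_one (t : ℕ) : stateDist P π p0 t s ≤ 1 :=
    sum_stateDist hP1 hπ1 hp01 t ▸ single_le_sum (fun s _ => hnonneg t s) (mem_univ s)
  refine (summable_geometric_of_lt_one hγ0 hγ1).of_nonneg_of_le
    (fun t => mul_nonneg (pow_nonneg hγ0 t) (hnonneg t s)) fun t => ?_
  simpa using mul_le_mul_of_nonneg_left (hle_one t) (pow_nonneg hγ0 t)

theorem hasSum_stateDist_succ {γ : ℝ} {P : S → A → S → ℝ} {π : S → A → ℝ} {p0 : S → ℝ}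
    (hsum : ∀ s, Summable fun t => γ ^ t * stateDist P π p0 t s) (s' : S) :
    HasSum (fun t => (1 - γ) * (γ ^ t * stateDist P π p0 (t + 1) s'))
      (nextDist P π (discDist γ P π p0) s') := by
  have h := hasSum_sum fun s (_ : s ∈ univ) => hasSum_sum fun a (_ : a ∈ univ) =>
    ((hsum s).hasSum.mul_left (1 - γ)).mul_right (π s a * P s a s')
  simp only [← mul_assoc] at h
  simp only [nextDist, discDist, stateDist, mul_sum]
  exact h.congr_fun fun t => sum_congr rfl fun s _ => sum_congr rfl fun a _ => by ring

theorem discDist_eq_bellman_of_summable {γ : ℝ} {P : S → A → S → ℝ} {π : S → A → ℝ}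
    {p0 : S → ℝ} (hsum : ∀ s, Summable fun t => γ ^ t * stateDist P π p0 t s) (s : S) :
    discDist γ P π p0 s = (1 - γ) * p0 s + γ * nextDist P π (discDist γ P π p0) s := by
  have h := HasSum.zero_add (f := fun t => (1 - γ) * (γ ^ t * stateDist P π p0 t s))
    (((hasSum_stateDist_succ hsum s).mul_left γ).congr_fun fun t => by ring)
  exact ((hsum s).hasSum.mul_left (1 - γ)).unique h |>.trans (by simp [stateDist])

theorem Lfun_eq_zero_of_bellman {γ : ℝ} {P : S → A → S → ℝ} {π μ : S → A → ℝ}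
    {p0 d dμ w : S → ℝ} (hμ : ∀ s a, μ s a ≠ 0) (hw : ∀ s, dμ s * w s = d s)
    (hd : ∀ s, d s = (1 - γ) * p0 s + γ * nextDist P π d s)
    (hdμ : ∀ s, dμ s = (1 - γ) * p0 s + γ * nextDist P μ dμ s) (f : S → ℝ) :
    Lfun γ P π μ dμ p0 w f = 0 := by
  have hweight (s : S) (a : A) (s' : S) :
      dμ s * μ s a * P s a s' * (w s * (π s a / μ s a) - w s') * f s' =
        d s * π s a * P s a s' * f s' - dμ s * μ s a * P s a s' * (w s' * f s') := by
    rw [← hw s]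
    field_simp [hμ s a]
  have hflow : ∑ s, ∑ a, ∑ s',
      dμ s * μ s a * P s a s' * (w s * (π s a / μ s a) - w s') * f s' =
        ∑ s', nextDist P π d s' * f s' - ∑ s', nextDist P μ dμ s' * (w s' * f s') := by
    simp only [hweight, sum_sub_distrib, sum_nextDist_mul]
  rw [Lfun, hflow, mul_sub, mul_sum, mul_sum, mul_sum, ← sum_sub_distrib, ← sum_add_distrib]
  refine sum_eq_zero fun s _ => ?_
  linear_combination (-f s) * hd s + (w s * f s) * hdμ s - f s * hw s

end

/-- If `d^μ(s) > 0` for all `s` and `μ(a|s) > 0` for all `(s,a)`, then the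
exact distribution ratio `w(s) = d^π(s)/d^μ(s)` satisfies `L(w,f) = 0` for every `f`. -/
theorem ratio_satisfies_L_eq_zero {S A : Type} [Fintype S] [Fintype A]
    (γ : ℝ) (hγ0 : 0 < γ) (hγ1 : γ < 1)
    (P : S → A → S → ℝ) (hP0 : ∀ s a s', 0 ≤ P s a s') (hP1 : ∀ s a, ∑ s', P s a s' = 1)
    (p0 : S → ℝ) (hp00 : ∀ s, 0 ≤ p0 s) (hp01 : ∑ s, p0 s = 1)
    (π : S → A → ℝ) (hπ0 : ∀ s a, 0 ≤ π s a) (hπ1 : ∀ s, ∑ a, π s a = 1)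
    (μ : S → A → ℝ) (hμ0 : ∀ s a, 0 < μ s a) (hμ1 : ∀ s, ∑ a, μ s a = 1)
    (hdμ : ∀ s, 0 < discDist γ P μ p0 s) :
    ∀ f : S → ℝ,
      Lfun γ P π μ (discDist γ P μ p0) p0
        (fun s => discDist γ P π p0 s / discDist γ P μ p0 s) f = 0 := by
  intro f
  have hsum {ν : S → A → ℝ} (hν0 : ∀ s a, 0 ≤ ν s a) (hν1 : ∀ s, ∑ a, ν s a = 1) :
      ∀ s, Summable fun t => γ ^ t * stateDist P ν p0 t s :=
    summable_pow_mul_stateDist hγ0.le hγ1 hP0 hP1 hν0 hν1 hp00 hp01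
  exact Lfun_eq_zero_of_bellman (fun s a => (hμ0 s a).ne')
    (fun s => mul_div_cancel₀ _ (hdμ s).ne')
    (discDist_eq_bellman_of_summable (hsum hπ0 hπ1))
    (discDist_eq_bellman_of_summable (hsum (fun s a => (hμ0 s a).le) hμ1)) f
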